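/- Let ω ∈ T_▷(𝔾) with ‖ω‖ = 1 and let 𝒰 be a free ultrafilter on ℕ. Then the map L_{m_𝒰} is a contractive projection from B(L²(𝔾)) onto H̃_{m_𝒰}, and H̃_{m_𝒰} = H̃_ω. -/

import Mathlib

set_option maxHeartbeats 1000000
set_option synthInstance.maxHeartbeats 2000000

open Filter Topology

noncomputable section

namespace QGPaper

/-- Abstract data of a (von Neumann algebraic) locally compact quantum group `𝔾`,
standardly represented on the Hilbert space `H = L²(𝔾)`.

* `M` is the von Neumann algebra `L^∞(𝔾) ⊆ B(L²(𝔾))`;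
* `Mhat` is the dual quantum group von Neumann algebra `L^∞(𝔾̂)`;
* `T` is the space `T(L²(𝔾))` of trace class operators, regarded (isometrically) as the
  subspace of normal functionals inside the dual `B(L²(𝔾))* = (H →L[ℂ] H) →L[ℂ] ℂ`;
* `conv` is the convolution `▷` on `T(L²(𝔾))` induced by the right fundamental unitary `V`
  via `Γ̃(x) = V(x⊗1)V*`, i.e. `ω ▷ τ = Γ̃⋆(ω ⊗ τ)`;
* `actL ω x = ω ▷ x = (ι⊗ω)Γ̃(x)` and `actR x ω = x ▷ ω = (ω⊗ι)Γ̃(x)` are the induced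
  module actions of `T_▷(𝔾)` on `B(L²(𝔾))`, determined by duality:
  `⟨γ, ω ▷ x⟩ = ⟨γ ▷ ω, x⟩` and `⟨γ, x ▷ ω⟩ = ⟨ω ▷ γ, x⟩`;
* `C0` is the reduced C*-algebra `C₀(𝔾)`. -/
structure QGData (H : Type u) [NormedAddCommGroup H] [InnerProductSpace ℂ H]
    [CompleteSpace H] : Type u where
  M : VonNeumannAlgebra H
  Mhat : VonNeumannAlgebra H
  T : Submodule ℂ ((H →L[ℂ] H) →L[ℂ] ℂ)
  T_closed : IsClosed (T : Set ((H →L[ℂ] H) →L[ℂ] ℂ))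
  /-- the normal functionals separate the points of `B(L²(𝔾))` -/
  T_separates : ∀ x : H →L[ℂ] H, (∀ ω : T, ω.1 x = 0) → x = 0
  /-- `B(L²(𝔾)) = T(L²(𝔾))*`: every bounded functional on `T(L²(𝔾))` is represented by
  a bounded operator -/
  T_predual : ∀ φ : T →ₗ[ℂ] ℂ, ∀ C : ℝ, (∀ ω : T, ‖φ ω‖ ≤ C * ‖ω‖) →
    ∃ x : H →L[ℂ] H, ‖x‖ ≤ C ∧ ∀ ω : T, φ ω = ω.1 x
  /-- the convolution product `▷` of `T_▷(𝔾)` -/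
  conv : T → T → T
  conv_add_left : ∀ ω₁ ω₂ γ, conv (ω₁ + ω₂) γ = conv ω₁ γ + conv ω₂ γ
  conv_add_right : ∀ ω γ₁ γ₂, conv ω (γ₁ + γ₂) = conv ω γ₁ + conv ω γ₂
  conv_smul_left : ∀ (c : ℂ) ω γ, conv (c • ω) γ = c • conv ω γ
  conv_smul_right : ∀ (c : ℂ) ω γ, conv ω (c • γ) = c • conv ω γ
  conv_assoc : ∀ ω γ τ, conv (conv ω γ) τ = conv ω (conv γ τ)
  norm_conv_le : ∀ ω γ, ‖conv ω γ‖ ≤ ‖ω‖ * ‖γ‖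
  /-- `ω ▷ x`, the left action of `T_▷(𝔾)` on `B(L²(𝔾))` -/
  actL : T → (H →L[ℂ] H) → (H →L[ℂ] H)
  /-- `x ▷ ω`, the right action of `T_▷(𝔾)` on `B(L²(𝔾))` -/
  actR : (H →L[ℂ] H) → T → (H →L[ℂ] H)
  actL_spec : ∀ (ω γ : T) (x : H →L[ℂ] H), γ.1 (actL ω x) = (conv γ ω).1 x
  actR_spec : ∀ (ω γ : T) (x : H →L[ℂ] H), γ.1 (actR x ω) = (conv ω γ).1 x
  /-- for `x ∈ L^∞(𝔾)` one has `ω ▷ x = π(ω) ⋆ x ∈ L^∞(𝔾)` -/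
  actL_mem_M : ∀ (ω : T), ∀ x ∈ M, actL ω x ∈ M
  /-- for `x ∈ L^∞(𝔾)` one has `x ▷ ω = x ⋆ π(ω) ∈ L^∞(𝔾)` -/
  actR_mem_M : ∀ (ω : T), ∀ x ∈ M, actR x ω ∈ M
  /-- for `x ∈ L^∞(𝔾)`, `x ▷ ω = x ⋆ π(ω)` only depends on `π(ω) = ω|_{L^∞(𝔾)}` -/
  actR_depends_on_pi : ∀ x ∈ M, ∀ ω γ : T,
    (∀ y ∈ M, ω.1 y = γ.1 y) → actR x ω = actR x γ
  /-- `ω ▷ x̂ = ⟨ω,1⟩ x̂` for `x̂ ∈ L^∞(𝔾̂)` -/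
  actL_Mhat : ∀ (ω : T), ∀ x ∈ Mhat, actL ω x = (ω.1 1) • x
  /-- `x̂ ▷ ω = ⟨ω,x̂⟩ 1` for `x̂ ∈ L^∞(𝔾̂)` -/
  actR_Mhat : ∀ (ω : T), ∀ x ∈ Mhat, actR x ω = (ω.1 x) • (1 : H →L[ℂ] H)
  /-- `L^∞(𝔾)` is weak*-closed: the bipolar of `L^∞(𝔾)` w.r.t. the pairing with `T` is itself -/
  M_bipolar : ∀ x : H →L[ℂ] H,
    (∀ ω : T, (∀ y ∈ M, ω.1 y = 0) → ω.1 x = 0) → x ∈ M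
  /-- `L^∞(𝔾̂)` is weak*-closed -/
  Mhat_bipolar : ∀ x : H →L[ℂ] H,
    (∀ ω : T, (∀ y ∈ Mhat, ω.1 y = 0) → ω.1 x = 0) → x ∈ Mhat
  /-- the reduced C*-algebra `C₀(𝔾)` -/
  C0 : Set (H →L[ℂ] H)
  C0_subset_M : C0 ⊆ (M : Set (H →L[ℂ] H))
  C0_isClosed : IsClosed C0

namespace QGData

variable {H : Type u} [NormedAddCommGroup H] [InnerProductSpace ℂ H] [CompleteSpace H]
variable (q : QGData H)

/-- a state of `T_▷(𝔾)`: a norm-one (automatically positive) normal functional with `ω(1) = 1`. -/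
def IsState (ω : q.T) : Prop := ‖ω‖ = 1 ∧ ω.1 1 = 1

/-- the space `H̃_ω` of `ω`-harmonic operators in `B(L²(𝔾))` -/
def Hsharp (ω : q.T) : Set (H →L[ℂ] H) := {x | q.actL ω x = x}

/-- `pow ω n = ω^(n+1)`, the convolution powers of `ω` -/
def pow (ω : q.T) : ℕ → q.T
  | 0 => ω
  | n + 1 => q.conv (pow ω n) ω

/-- the Cesàro sums `ω_n = (1/n) ∑_{k=1}^n ω^k` -/
def cesaro (ω : q.T) (n : ℕ) : q.T := (n : ℂ)⁻¹ • ∑ k ∈ Finset.range n, q.pow ω k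

/-- the preannihilator `L^∞(𝔾̂)_⊥` of `L^∞(𝔾̂)` in `T_▷(𝔾)` -/
def MhatPerp : Set q.T := {ω : q.T | ∀ y ∈ q.Mhat, ω.1 y = 0}

/-- the preannihilator `L^∞(𝔾)_⊥` of `L^∞(𝔾)` in `T(L²(𝔾))` -/
def MPerp : Set q.T := {ω : q.T | ∀ y ∈ q.M, ω.1 y = 0}

/-- the closed left ideal `J_ω`, the norm closure of `{γ - γ ▷ ω : γ ∈ T_▷(𝔾)}` -/
def Jideal (ω : q.T) : Set q.T := closure {τ : q.T | ∃ γ : q.T, τ = γ - q.conv γ ω}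

/-- `LUC(𝔾)`, the closed linear span of `{x ⋆ f : x ∈ L^∞(𝔾), f ∈ L¹(𝔾)}`
(note `x ⋆ π(ω) = x ▷ ω` for `x ∈ L^∞(𝔾)`). -/
def LUC : Set (H →L[ℂ] H) :=
  closure (Submodule.span ℂ {y : H →L[ℂ] H | ∃ x ∈ q.M, ∃ ω : q.T, y = q.actR x ω} :
    Set (H →L[ℂ] H))

/-- `𝔾` is amenable: there is a left invariant mean on `L^∞(𝔾)`, i.e. a state `m` with
`⟨m, x ⋆ f⟩ = ⟨f,1⟩⟨m,x⟩` for all `x ∈ L^∞(𝔾)`, `f ∈ L¹(𝔾)` (every state of `L^∞(𝔾)`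
being the restriction of a state of `B(L²(𝔾))`). -/
def Amenable : Prop :=
  ∃ m : (H →L[ℂ] H) →L[ℂ] ℂ, ‖m‖ = 1 ∧ m 1 = 1 ∧
    ∀ x ∈ q.M, ∀ ω : q.T, m (q.actR x ω) = ω.1 1 * m x

/-- the norm of `π(ω) = ω|_{L^∞(𝔾)}` in `L¹(𝔾) = L^∞(𝔾)_*` -/
def piNorm (ω : q.T) : ℝ := ⨆ x : {x : H →L[ℂ] H // x ∈ q.M ∧ ‖x‖ ≤ 1}, ‖ω.1 x.1‖

/-- `𝔾` is co-amenable: the convolution algebra `L¹(𝔾) = T_▷(𝔾)/L^∞(𝔾)_⊥` has a bounded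
(two-sided) approximate identity. -/
def CoAmenable : Prop :=
  ∃ C : ℝ, 0 < C ∧ ∀ ε : ℝ, 0 < ε → ∀ S : Finset q.T, ∃ e : q.T, q.piNorm e ≤ C ∧
    ∀ ω ∈ S, q.piNorm (q.conv ω e - ω) < ε ∧ q.piNorm (q.conv e ω - ω) < ε

/-- `𝔾` is discrete: `L¹(𝔾)` is unital. -/
def Discrete : Prop :=
  ∃ e : q.T, ∀ ω : q.T, ∀ x ∈ q.M, (q.conv e ω).1 x = ω.1 x ∧ (q.conv ω e).1 x = ω.1 x

/-- `𝔾` is compact: `1 ∈ C₀(𝔾)`. -/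
def Compact : Prop := (1 : H →L[ℂ] H) ∈ q.C0

/-- `𝔾` is finite: `L^∞(𝔾)` is finite dimensional. -/
def Finite : Prop := FiniteDimensional ℂ q.M.toStarSubalgebra.toSubalgebra

/-- a state `ω` is non-degenerate if for every non-zero positive `x ∈ C₀(𝔾)` there is
`n` with `⟨ω^n, x⟩ > 0`. -/
def NonDegenerate (ω : q.T) : Prop :=
  ∀ x ∈ q.C0, x ≠ 0 → ContinuousLinearMap.IsPositive x →
    ∃ n : ℕ, 0 < ((q.pow ω n).1 x).re


/-- the family `𝒥 = {J_ω : ω a state of T_▷(𝔾)}` -/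
def Jfamily : Set (Set q.T) := {S | ∃ ω : q.T, q.IsState ω ∧ S = q.Jideal ω}

/-- a subset `J` of `T_▷(𝔾)` has a bounded right approximate identity (for `▷`),
phrased via the standard multi-element approximation property with a fixed bound. -/
def HasRightBAI (J : Set q.T) : Prop :=
  ∃ C : ℝ, 0 < C ∧ ∀ ε : ℝ, 0 < ε → ∀ S : Finset q.T, (↑S : Set q.T) ⊆ J →
    ∃ e ∈ J, ‖e‖ ≤ C ∧ ∀ γ ∈ S, ‖q.conv γ e - γ‖ < ε

end QGData

/-- the annihilator `K(L²(𝔾))^⊥` of the compact operators in `B(L²(𝔾))*` -/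
def Kperp (H : Type u) [NormedAddCommGroup H] [InnerProductSpace ℂ H] [CompleteSpace H] :
    Set ((H →L[ℂ] H) →L[ℂ] ℂ) :=
  {m | ∀ x : H →L[ℂ] H, IsCompactOperator ⇑x → m x = 0}

/-!
Write `ω_n` for the Cesàro means of the convolution powers of `ω`. Since `ω ▷ ω_n - ω_n`
telescopes to `(ω^{n+1} - ω)/n`, which has norm at most `2/n`, any weak*-limit `m` of `(ω_n)`
along a free ultrafilter satisfies `m(y ▷ ω) = m(y)`, and this makes every `L_m(x)`
`ω`-harmonic. Conversely, for `ω`-harmonic `x` the functionals `γ ▷ ω^k` and `γ` agree at `x`,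
so `m(x ▷ γ) = ⟨γ, x⟩`, i.e. `L_m(x) = x`. Contractivity holds because `‖ω_n‖ ≤ 1`.
-/

theorem range_eq_fixed_eq_of_retraction {α : Type*} {P : α → α} {S : Set α}
    (hmaps : ∀ x, P x ∈ S) (hfix : ∀ x ∈ S, P x = x) :
    Set.range P = {x | P x = x} ∧ {x | P x = x} = S := by
  refine ⟨?_, ?_⟩
  · ext x
    exact ⟨fun ⟨y, hy⟩ => hy ▸ hfix _ (hmaps y), fun hx => ⟨x, hx⟩⟩
  · ext x
    exact ⟨fun hx => hx ▸ hmaps x, hfix x⟩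

namespace QGData

variable {H : Type u} [NormedAddCommGroup H] [InnerProductSpace ℂ H] [CompleteSpace H]
variable (q : QGData H)

theorem ext_of_forall_apply_eq {x y : H →L[ℂ] H} (h : ∀ γ : q.T, γ.1 x = γ.1 y) : x = y :=
  sub_eq_zero.mp <| q.T_separates (x - y) fun γ => by rw [map_sub, h γ, sub_self]

theorem norm_le_of_forall_norm_apply_le {x : H →L[ℂ] H} {C : ℝ}
    (h : ∀ γ : q.T, ‖γ.1 x‖ ≤ C * ‖γ‖) : ‖x‖ ≤ C := by
  let φ : q.T →ₗ[ℂ] ℂ :=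
    { toFun := fun γ => γ.1 x
      map_add' := fun _ _ => rfl
      map_smul' := fun _ _ => rfl }
  obtain ⟨y, hy, hφy⟩ := q.T_predual φ C h
  rwa [q.ext_of_forall_apply_eq hφy]

theorem norm_actR_le (x : H →L[ℂ] H) (γ : q.T) : ‖q.actR x γ‖ ≤ ‖γ‖ * ‖x‖ :=
  q.norm_le_of_forall_norm_apply_le fun τ =>
    calc ‖τ.1 (q.actR x γ)‖ = ‖(q.conv γ τ).1 x‖ := by rw [q.actR_spec]
      _ ≤ ‖q.conv γ τ‖ * ‖x‖ := (q.conv γ τ).1.le_opNorm x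
      _ ≤ ‖γ‖ * ‖τ‖ * ‖x‖ := by gcongr; exact q.norm_conv_le γ τ
      _ = ‖γ‖ * ‖x‖ * ‖τ‖ := by ring

theorem actR_conv (x : H →L[ℂ] H) (γ ω : q.T) :
    q.actR x (q.conv γ ω) = q.actR (q.actR x γ) ω :=
  q.ext_of_forall_apply_eq fun τ => by simp only [q.actR_spec, q.conv_assoc]

def convLeft (ω : q.T) : q.T →ₗ[ℂ] q.T where
  toFun := q.conv ω
  map_add' := q.conv_add_right ω
  map_smul' c γ := q.conv_smul_right c ω γ

theorem conv_pow (ω : q.T) (k : ℕ) : q.conv ω (q.pow ω k) = q.pow ω (k + 1) := by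
  induction k with
  | zero => rfl
  | succ k ih => exact (q.conv_assoc ω (q.pow ω k) ω).symm.trans (congrArg (q.conv · ω) ih)

theorem norm_pow_le_one {ω : q.T} (hω : ‖ω‖ ≤ 1) (k : ℕ) : ‖q.pow ω k‖ ≤ 1 := by
  induction k with
  | zero => exact hω
  | succ k ih =>
    calc ‖q.pow ω (k + 1)‖ ≤ ‖q.pow ω k‖ * ‖ω‖ := q.norm_conv_le _ _
      _ ≤ 1 := mul_le_one₀ ih (norm_nonneg ω) hω

theorem conv_cesaro (τ ω : q.T) (n : ℕ) :
    q.conv τ (q.cesaro ω n) = (n : ℂ)⁻¹ • ∑ k ∈ Finset.range n, q.conv τ (q.pow ω k) := by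
  change q.convLeft τ _ = _
  rw [cesaro, map_smul, map_sum]
  rfl

/- Norm estimates for elements of `q.T` are carried out in the ambient dual space, where instance
search finds `NormSMulClass` and the like, which it fails to do on the submodule. -/
theorem coe_cesaro (ω : q.T) (n : ℕ) :
    (q.cesaro ω n : (H →L[ℂ] H) →L[ℂ] ℂ) =
      (n : ℂ)⁻¹ • ∑ k ∈ Finset.range n, (q.pow ω k : (H →L[ℂ] H) →L[ℂ] ℂ) := by
  simp [cesaro]

theorem norm_cesaro_le_one {ω : q.T} (hω : ‖ω‖ ≤ 1) (n : ℕ) : ‖q.cesaro ω n‖ ≤ 1 := by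
  rcases n.eq_zero_or_pos with rfl | hn
  · simp [cesaro]
  calc ‖q.cesaro ω n‖ ≤ (n : ℝ)⁻¹ * ∑ k ∈ Finset.range n, ‖q.pow ω k‖ := by
        rw [Submodule.coe_norm, coe_cesaro, norm_smul, norm_inv, Complex.norm_natCast]
        gcongr
        exact norm_sum_le _ _
    _ ≤ (n : ℝ)⁻¹ * ∑ _k ∈ Finset.range n, 1 := by
        gcongr with k
        exact q.norm_pow_le_one hω k
    _ = 1 := by simp [hn.ne']

theorem coe_conv_cesaro_sub_cesaro (ω : q.T) (n : ℕ) :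
    (q.conv ω (q.cesaro ω n) : (H →L[ℂ] H) →L[ℂ] ℂ) - q.cesaro ω n =
      (n : ℂ)⁻¹ • ((q.pow ω n : (H →L[ℂ] H) →L[ℂ] ℂ) - q.pow ω 0) := by
  rw [conv_cesaro, Submodule.coe_smul, coe_cesaro, ← smul_sub, Submodule.coe_sum,
    ← Finset.sum_sub_distrib]
  simp only [conv_pow]
  rw [Finset.sum_range_sub (fun k => (q.pow ω k : (H →L[ℂ] H) →L[ℂ] ℂ))]

theorem tendsto_conv_cesaro_sub_cesaro {ω : q.T} (hω : ‖ω‖ ≤ 1) :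
    Tendsto (fun n => (q.conv ω (q.cesaro ω n) : (H →L[ℂ] H) →L[ℂ] ℂ) - q.cesaro ω n)
      atTop (𝓝 0) := by
  refine squeeze_zero_norm (a := fun n : ℕ => 2 * (n : ℝ)⁻¹) (fun n => ?_) ?_
  · rw [coe_conv_cesaro_sub_cesaro, norm_smul, norm_inv, Complex.norm_natCast, mul_comm]
    gcongr
    calc _ ≤ ‖q.pow ω n‖ + ‖q.pow ω 0‖ := norm_sub_le _ _
      _ ≤ 2 := by linarith [q.norm_pow_le_one hω n, q.norm_pow_le_one hω 0]
  · simpa using tendsto_inv_atTop_nhds_zero_nat.const_mul (2 : ℝ)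

theorem conv_pow_apply_of_mem_Hsharp {ω : q.T} {x : H →L[ℂ] H} (hx : x ∈ q.Hsharp ω)
    (τ : q.T) (k : ℕ) : (q.conv τ (q.pow ω k)).1 x = τ.1 x := by
  have hconv : ∀ σ : q.T, (q.conv σ ω).1 x = σ.1 x := fun σ => by
    rw [← q.actL_spec, show q.actL ω x = x from hx]
  induction k with
  | zero => exact hconv τ
  | succ k ih => rw [pow, ← q.conv_assoc, hconv, ih]

theorem conv_cesaro_apply_of_mem_Hsharp {ω : q.T} {x : H →L[ℂ] H} (hx : x ∈ q.Hsharp ω)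
    (τ : q.T) {n : ℕ} (hn : n ≠ 0) : (q.conv τ (q.cesaro ω n)).1 x = τ.1 x := by
  simp [conv_cesaro, q.conv_pow_apply_of_mem_Hsharp hx, hn]

variable {q}

section CesaroLimit

variable {ω : q.T} {l : Filter ℕ} {m : (H →L[ℂ] H) →L[ℂ] ℂ}

theorem norm_le_one_of_tendsto_cesaro (hω : ‖ω‖ ≤ 1) [l.NeBot]
    (hm : ∀ x, Tendsto (fun n => (q.cesaro ω n).1 x) l (𝓝 (m x))) : ‖m‖ ≤ 1 :=
  m.opNorm_le_bound zero_le_one fun x =>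
    le_of_tendsto (hm x).norm <| Eventually.of_forall fun n =>
      calc ‖(q.cesaro ω n).1 x‖ ≤ ‖q.cesaro ω n‖ * ‖x‖ := (q.cesaro ω n).1.le_opNorm x
        _ ≤ 1 * ‖x‖ := by gcongr; exact q.norm_cesaro_le_one hω n

theorem apply_actR_self_of_tendsto_cesaro (hω : ‖ω‖ ≤ 1) [l.NeBot] (hl : l ≤ atTop)
    (hm : ∀ x, Tendsto (fun n => (q.cesaro ω n).1 x) l (𝓝 (m x))) (y : H →L[ℂ] H) :
    m (q.actR y ω) = m y := by
  have hdefect : Tendsto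
      (fun n => ((q.conv ω (q.cesaro ω n) : (H →L[ℂ] H) →L[ℂ] ℂ) - q.cesaro ω n) y) l (𝓝 0) :=
    (((ContinuousLinearMap.apply ℂ ℂ y).continuous.tendsto 0).comp
      ((q.tendsto_conv_cesaro_sub_cesaro hω).mono_left hl)).congr fun _ => rfl
  refine tendsto_nhds_unique (hm _) ?_
  simpa [q.actR_spec] using (hm y).add hdefect

theorem apply_actR_of_mem_Hsharp [l.NeBot] (hl : l ≤ atTop)
    (hm : ∀ x, Tendsto (fun n => (q.cesaro ω n).1 x) l (𝓝 (m x)))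
    {x : H →L[ℂ] H} (hx : x ∈ q.Hsharp ω) (γ : q.T) : m (q.actR x γ) = γ.1 x := by
  refine tendsto_nhds_unique (hm _) (tendsto_const_nhds.congr' ?_)
  filter_upwards [hl (eventually_ne_atTop 0)] with n hn
  rw [q.actR_spec, q.conv_cesaro_apply_of_mem_Hsharp hx γ hn]

end CesaroLimit

end QGData

/-- Lemma 2.3. Let `ω ∈ T_▷(𝔾)` with `‖ω‖ = 1` and let `𝒰` be a
free ultrafilter on `ℕ`.  Let `m_𝒰 = w*-lim_𝒰 ω_n` in `B(L²(𝔾))*` (Cesàro sums `ω_n`),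
and let `L_{m_𝒰}` be given by `⟨L_{m_𝒰}(x), γ⟩ = ⟨m_𝒰, x ▷ γ⟩`.  Then `L_{m_𝒰}` is a
contractive projection from `B(L²(𝔾))` onto `H̃_{m_𝒰}`, and `H̃_{m_𝒰} = H̃_ω`. -/
theorem LmU_contractive_projection_onto_harmonics
    {H : Type u} [NormedAddCommGroup H] [InnerProductSpace ℂ H] [CompleteSpace H]
    (q : QGData H)
    (ω : q.T) (hω : ‖ω‖ = 1)
    (𝒰 : Ultrafilter ℕ) (h𝒰 : (𝒰 : Filter ℕ) ≤ Filter.cofinite)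
    (m : (H →L[ℂ] H) →L[ℂ] ℂ)
    (hm : ∀ x : H →L[ℂ] H,
      Filter.Tendsto (fun n => (q.cesaro ω n).1 x) (𝒰 : Filter ℕ) (𝓝 (m x)))
    (Lm : (H →L[ℂ] H) → (H →L[ℂ] H))
    (hLm : ∀ (x : H →L[ℂ] H) (γ : q.T), γ.1 (Lm x) = m (q.actR x γ)) :
    (∀ x : H →L[ℂ] H, ‖Lm x‖ ≤ ‖x‖) ∧
    (∀ x : H →L[ℂ] H, Lm (Lm x) = Lm x) ∧
    Set.range Lm = {x : H →L[ℂ] H | Lm x = x} ∧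
    {x : H →L[ℂ] H | Lm x = x} = q.Hsharp ω := by
  have hl : (𝒰 : Filter ℕ) ≤ atTop := Nat.cofinite_eq_atTop ▸ h𝒰
  have hfix : ∀ x ∈ q.Hsharp ω, Lm x = x := fun x hx =>
    q.ext_of_forall_apply_eq fun γ => by rw [hLm, QGData.apply_actR_of_mem_Hsharp hl hm hx]
  have hharm : ∀ x, Lm x ∈ q.Hsharp ω := fun x =>
    q.ext_of_forall_apply_eq fun γ => by
      rw [q.actL_spec, hLm, hLm, q.actR_conv,
        QGData.apply_actR_self_of_tendsto_cesaro hω.le hl hm]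
  have hcontr : ∀ x, ‖Lm x‖ ≤ ‖x‖ := fun x =>
    q.norm_le_of_forall_norm_apply_le fun γ =>
      calc ‖γ.1 (Lm x)‖ = ‖m (q.actR x γ)‖ := by rw [hLm]
        _ ≤ ‖m‖ * ‖q.actR x γ‖ := m.le_opNorm _
        _ ≤ 1 * (‖γ‖ * ‖x‖) := by
          gcongr
          · exact QGData.norm_le_one_of_tendsto_cesaro hω.le hm
          · exact q.norm_actR_le x γ
        _ = ‖x‖ * ‖γ‖ := by ring
  exact ⟨hcontr, fun x => hfix _ (hharm x), range_eq_fixed_eq_of_retraction hharm hfix⟩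

end QGPaper
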